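/- For $(x,y)\in\mathbb{R}^2\times\mathbb{R}^2$, define $N(x,y)=\big[(x_1^4+y_1^4)^2+(x_1^4+y_2^4)^2+(x_2^4+y_1^4)^2+(x_2^4+y_2^4)^2\big]^{1/8}$. Then $N$ is a norm on $\mathbb{R}^4$: it is nonnegative, vanishes only at $0$, is absolutely homogeneous of degree $1$, and satisfies the triangle inequality. -/

import Mathlib

/-!
Writing `v = (x, y)`, `N v` is the `ℓ⁸` norm of the four `ℓ⁴` norms `‖(xᵢ, yⱼ)‖₄`. Each of these
is a seminorm of `v`, and an `ℓᵖ` combination of seminorms is again a seminorm, because the `ℓᵖ`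
norm is monotone in the absolute values of the entries. `N` is definite since the four pairs
`(xᵢ, yⱼ)` together cover every coordinate.
-/

open scoped ENNReal

namespace PiLp

variable {ι : Type*} [Fintype ι] {p : ℝ≥0∞} [Fact (1 ≤ p)] {β γ : ι → Type*}
  [∀ i, SeminormedAddCommGroup (β i)] [∀ i, SeminormedAddCommGroup (γ i)]

theorem norm_le_norm_of_forall_norm_le {f : PiLp p β} {g : PiLp p γ} (h : ∀ i, ‖f i‖ ≤ ‖g i‖) :
    ‖f‖ ≤ ‖g‖ := by
  rcases eq_or_ne p ∞ with rfl | hp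
  · rw [norm_eq_ciSup, norm_eq_ciSup]
    exact ciSup_mono (Set.finite_range _).bddAbove h
  · have hp₀ : 0 < p.toReal := ENNReal.toReal_pos (zero_lt_one.trans_le Fact.out).ne' hp
    rw [norm_eq_sum hp₀, norm_eq_sum hp₀]
    gcongr with i
    exact h i

end PiLp

namespace Seminorm

variable {𝕜 E ι : Type*} [SeminormedRing 𝕜] [AddCommGroup E] [Module 𝕜 E] [Fintype ι]

noncomputable def lpComp (p : ℝ≥0∞) [Fact (1 ≤ p)] (μ : ι → Seminorm 𝕜 E) : Seminorm 𝕜 E :=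
  Seminorm.of (fun v => ‖WithLp.toLp p fun i => μ i v‖)
    (fun v w => by
      refine (PiLp.norm_le_norm_of_forall_norm_le (g := WithLp.toLp p (fun i => μ i v) +
        WithLp.toLp p (fun i => μ i w)) fun i => ?_).trans (norm_add_le _ _)
      simp only [PiLp.add_apply, Real.norm_eq_abs]
      rw [abs_of_nonneg (apply_nonneg _ _), abs_of_nonneg (by positivity)]
      exact map_add_le_add _ _ _)
    (fun a v => by
      have : (fun i => μ i (a • v)) = ‖a‖ • fun i => μ i v := by
        ext i; simp [map_smul_eq_mul]
      rw [this, WithLp.toLp_smul, norm_smul, norm_norm])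

variable {p : ℝ≥0∞} [Fact (1 ≤ p)] (μ : ι → Seminorm 𝕜 E)

theorem lpComp_apply (v : E) : lpComp p μ v = ‖WithLp.toLp p fun i => μ i v‖ := rfl

theorem lpComp_eq_zero_iff {v : E} : lpComp p μ v = 0 ↔ ∀ i, μ i v = 0 := by
  rw [lpComp_apply, norm_eq_zero, ← WithLp.toLp_zero, (WithLp.toLp_injective p).eq_iff, funext_iff]
  rfl

theorem lpComp_pow_eq_sum {n : ℕ} (hn : n ≠ 0) (hp : p = n) (v : E) :
    lpComp p μ v ^ n = ∑ i, μ i v ^ n := by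
  rw [lpComp_apply, PiLp.norm_eq_of_nat n hp, one_div,
    Real.rpow_inv_natCast_pow (by positivity) hn]
  simp only [Real.norm_eq_abs, abs_of_nonneg (apply_nonneg _ _)]

end Seminorm

instance : Fact (1 ≤ (4 : ℝ≥0∞)) := ⟨by norm_num⟩
instance : Fact (1 ≤ (8 : ℝ≥0∞)) := ⟨by norm_num⟩

section MixedNorm

local notation "V" => (ℝ × ℝ) × (ℝ × ℝ)

def xCoord : Fin 2 → V →ₗ[ℝ] ℝ :=
  ![LinearMap.fst ℝ ℝ ℝ ∘ₗ LinearMap.fst ℝ _ _, LinearMap.snd ℝ ℝ ℝ ∘ₗ LinearMap.fst ℝ _ _]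

def yCoord : Fin 2 → V →ₗ[ℝ] ℝ :=
  ![LinearMap.fst ℝ ℝ ℝ ∘ₗ LinearMap.snd ℝ _ _, LinearMap.snd ℝ ℝ ℝ ∘ₗ LinearMap.snd ℝ _ _]

noncomputable def pairNorm (i j : Fin 2) : Seminorm ℝ V :=
  Seminorm.lpComp 4 ![(normSeminorm ℝ ℝ).comp (xCoord i), (normSeminorm ℝ ℝ).comp (yCoord j)]

noncomputable def mixedNorm : Seminorm ℝ V :=
  Seminorm.lpComp 8 fun ij : Fin 2 × Fin 2 => pairNorm ij.1 ij.2

theorem pairNorm_pow_four (i j : Fin 2) (v : V) :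
    pairNorm i j v ^ 4 = xCoord i v ^ 4 + yCoord j v ^ 4 := by
  rw [pairNorm, Seminorm.lpComp_pow_eq_sum _ four_ne_zero (by norm_num), Fin.sum_univ_two]
  simp [Even.pow_abs ⟨2, rfl⟩]

theorem mixedNorm_pow_eight (v : V) :
    mixedNorm v ^ 8 = (v.1.1 ^ 4 + v.2.1 ^ 4) ^ 2 + (v.1.1 ^ 4 + v.2.2 ^ 4) ^ 2 +
      (v.1.2 ^ 4 + v.2.1 ^ 4) ^ 2 + (v.1.2 ^ 4 + v.2.2 ^ 4) ^ 2 := by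
  rw [mixedNorm, Seminorm.lpComp_pow_eq_sum _ (by norm_num) (by norm_num), Fintype.sum_prod_type]
  simp only [Fin.sum_univ_two, show (8 : ℕ) = 4 * 2 from rfl, pow_mul, pairNorm_pow_four]
  simp [xCoord, yCoord, add_assoc]

theorem mixedNorm_eq_zero_iff {v : V} : mixedNorm v = 0 ↔ v = 0 := by
  simp only [mixedNorm, pairNorm, Seminorm.lpComp_eq_zero_iff]
  simp [Fin.forall_fin_two, xCoord, yCoord, Prod.ext_iff]
  tauto

end MixedNorm

/-- The function
`N(x,y) = [(x₁⁴+y₁⁴)² + (x₁⁴+y₂⁴)² + (x₂⁴+y₁⁴)² + (x₂⁴+y₂⁴)²]^{1/8}`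
is a norm on `ℝ⁴ = (ℝ×ℝ)×(ℝ×ℝ)`: nonnegative, vanishing only at `0`, absolutely
homogeneous, and satisfying the triangle inequality. -/
theorem example_N_is_norm
    (N : (ℝ × ℝ) × (ℝ × ℝ) → ℝ)
    (hN : ∀ v : (ℝ × ℝ) × (ℝ × ℝ), N v =
      ((v.1.1 ^ 4 + v.2.1 ^ 4) ^ 2 + (v.1.1 ^ 4 + v.2.2 ^ 4) ^ 2 +
        (v.1.2 ^ 4 + v.2.1 ^ 4) ^ 2 + (v.1.2 ^ 4 + v.2.2 ^ 4) ^ 2) ^ ((1 : ℝ) / 8)) :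
    (∀ v, 0 ≤ N v) ∧
    (∀ v, N v = 0 ↔ v = 0) ∧
    (∀ (a : ℝ) (v), N (a • v) = |a| * N v) ∧
    (∀ v w, N (v + w) ≤ N v + N w) := by
  obtain rfl : N = mixedNorm := funext fun v => by
    rw [hN, ← mixedNorm_pow_eight, one_div]
    exact_mod_cast Real.pow_rpow_inv_natCast (apply_nonneg mixedNorm v) (by norm_num : 8 ≠ 0)
  exact ⟨apply_nonneg _, fun _ => mixedNorm_eq_zero_iff,
    fun a v => by rw [map_smul_eq_mul, Real.norm_eq_abs], map_add_le_add _⟩
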